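/- arXiv:2504.13565 — 2 statements merged into one kernel-verified Lean document; each statement's English description precedes it below -/
import Mathlib

section
/- Under the ALICE model, if Y = Dβ* + Zᵀπ* + ε with E[ε | Z] = 0, and Z1,...,Zp are mutually independent with means μj, then for any subset S of {1,...,p} with |S| ≥ 2, E[ (∏_{s∈S}(Zs - μs)) (Y - Dβ*) ] = 0. -/
open MeasureTheory ProbabilityTheory

lemma myIntegrable_of_bdd {Ω : Type*} [MeasurableSpace Ω] (μ : Measure Ω) [IsProbabilityMeasure μ]
    {f : Ω → ℝ} (hf : Measurable f) {C : ℝ} (h : ∀ ω, |f ω| ≤ C) : Integrable f μ := by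
  refine (integrable_const C).mono' hf.aestronglyMeasurable (ae_of_all _ fun ω => ?_)
  simpa [Real.norm_eq_abs] using h ω

lemma myProd_integral {Ω : Type*} [MeasurableSpace Ω] (μ : Measure Ω) [IsProbabilityMeasure μ]
    {p : ℕ} (f : Fin p → Ω → ℝ) (hmeas : ∀ i, Measurable (f i))
    (hbdd : ∀ i, ∃ C : ℝ, ∀ ω, |f i ω| ≤ C)
    (hind : iIndepFun (m := fun _ : Fin p => (inferInstance : MeasurableSpace ℝ)) f μ)
    (T : Finset (Fin p)) :
    ∫ ω, ∏ s ∈ T, f s ω ∂μ = ∏ s ∈ T, ∫ ω, f s ω ∂μ := by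
  classical
  induction T using Finset.induction_on with
  | empty => simp
  | @insert i T hi ih =>
    have hprod_bdd : ∀ (T : Finset (Fin p)), ∃ C : ℝ, ∀ ω, |∏ s ∈ T, f s ω| ≤ C := by
      intro T
      choose C hC using hbdd
      refine ⟨∏ s ∈ T, max (C s) 0, fun ω => ?_⟩
      rw [Finset.abs_prod]
      exact Finset.prod_le_prod (fun s _ => abs_nonneg _)
        (fun s _ => (hC s ω).trans (le_max_left _ _))
    obtain ⟨CT, hCT⟩ := hprod_bdd T
    obtain ⟨Ci, hCi⟩ := hbdd i
    have hTmeas : Measurable (∏ s ∈ T, f s) := by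
      rw [show (∏ s ∈ T, f s) = fun ω => ∏ s ∈ T, f s ω from funext fun ω => by
        simp [Finset.prod_apply]]
      exact Finset.measurable_prod T fun s _ => hmeas s
    have hindep : IndepFun (∏ s ∈ T, f s) (f i) μ :=
      hind.indepFun_finsetProd_of_notMem hmeas hi
    have hintT : Integrable (∏ s ∈ T, f s) μ :=
      myIntegrable_of_bdd μ hTmeas (by intro ω; simpa [Finset.prod_apply] using hCT ω)
    have hinti : Integrable (f i) μ := myIntegrable_of_bdd μ (hmeas i) hCi
    have := hindep.integral_fun_mul_eq_mul_integral hintT.aestronglyMeasurable hinti.aestronglyMeasurable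
    simp_rw [Finset.prod_insert hi]
    rw [← ih]
    calc ∫ ω, f i ω * ∏ s ∈ T, f s ω ∂μ
        = ∫ ω, (∏ s ∈ T, f s) ω * f i ω ∂μ := by
          congr 1; funext ω; simp [Finset.prod_apply, mul_comm]
      _ = (∫ ω, (∏ s ∈ T, f s) ω ∂μ) * ∫ ω, f i ω ∂μ := this
      _ = (∫ ω, f i ω ∂μ) * ∫ ω, ∏ s ∈ T, f s ω ∂μ := by
          rw [mul_comm]; congr 1; apply integral_congr_ae; filter_upwards with ω
          simp [Finset.prod_apply]

theorem stmt_5 {Ω : Type*} [MeasurableSpace Ω] (μ : Measure Ω) [IsProbabilityMeasure μ]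
    (p : ℕ) (Y D : Ω → ℝ) (Z : Fin p → Ω → ℝ) (ε : Ω → ℝ)
    (βstar : ℝ) (πstar : Fin p → ℝ) (μs : Fin p → ℝ)
    (hmeasZ : ∀ j, Measurable (Z j)) (hmeasY : Measurable Y) (hmeasD : Measurable D)
    (hbdd : ∃ C : ℝ, ∀ j ω, |Z j ω| ≤ C)
    (hindep : iIndepFun (m := fun _ : Fin p => (inferInstance : MeasurableSpace ℝ)) Z μ)
    (hμ : ∀ j, ∫ ω, Z j ω ∂μ = μs j)
    (hmodel : ∀ᵐ ω ∂μ, Y ω = D ω * βstar + (∑ j, πstar j * Z j ω) + ε ω)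
    (hεint : Integrable ε μ)
    (hcond : μ[ε | MeasurableSpace.comap (fun ω (i : Fin p) => Z i ω)
        (inferInstance : MeasurableSpace (Fin p → ℝ))] =ᵐ[μ] 0)
    (S : Finset (Fin p)) (hS : 2 ≤ S.card)
    (hint : Integrable (fun ω => (∏ s ∈ S, (Z s ω - μs s)) * (Y ω - D ω * βstar)) μ)
    (hintε : Integrable (fun ω => (∏ s ∈ S, (Z s ω - μs s)) * ε ω) μ) :
    ∫ ω, (∏ s ∈ S, (Z s ω - μs s)) * (Y ω - D ω * βstar) ∂μ = 0 := by
  classical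
  obtain ⟨C0, hC0⟩ := hbdd
  set C : ℝ := max C0 0 with hCdef
  have hC : ∀ j ω, |Z j ω| ≤ C := fun j ω => (hC0 j ω).trans (le_max_left _ _)
  have hCnn : (0:ℝ) ≤ C := le_max_right _ _
  set P : Ω → ℝ := fun ω => ∏ s ∈ S, (Z s ω - μs s) with hP
  have hPmeas : Measurable P :=
    Finset.measurable_prod S fun s _ => (hmeasZ s).sub measurable_const
  set B : ℝ := ∏ s ∈ S, (C + |μs s|) with hB
  have hBnn : (0:ℝ) ≤ B := Finset.prod_nonneg fun s _ => by positivity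
  have hPbdd : ∀ ω, |P ω| ≤ B := by
    intro ω
    rw [hP, hB, Finset.abs_prod]
    refine Finset.prod_le_prod (fun s _ => abs_nonneg _) (fun s _ => ?_)
    calc |Z s ω - μs s| ≤ |Z s ω| + |μs s| := abs_sub _ _
      _ ≤ C + |μs s| := by linarith [hC s ω]
  -- the Z-terms vanish
  have hZterm : ∀ j : Fin p, ∫ ω, P ω * Z j ω ∂μ = 0 := by
    intro j
    set g : Fin p → ℝ → ℝ := fun i x =>
      if i = j then (if j ∈ S then (x - μs j) * x else x) else x - μs i with hg
    have hgmeas : ∀ i, Measurable (g i) := by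
      intro i
      by_cases h : i = j <;> by_cases h2 : j ∈ S <;> simp only [hg, h, h2, if_true, if_false] <;>
        fun_prop
    set f : Fin p → Ω → ℝ := fun i ω => g i (Z i ω) with hf
    have hfmeas : ∀ i, Measurable (f i) := fun i => (hgmeas i).comp (hmeasZ i)
    have hfind : iIndepFun (m := fun _ : Fin p => (inferInstance : MeasurableSpace ℝ)) f μ :=
      hindep.comp g hgmeas
    have hfbdd : ∀ i, ∃ Ci : ℝ, ∀ ω, |f i ω| ≤ Ci := by
      intro i
      by_cases h : i = j
      · by_cases h2 : j ∈ S
        · refine ⟨(C + |μs j|) * C, fun ω => ?_⟩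
          simp only [hf, hg, h, h2, if_true]
          rw [abs_mul]
          refine mul_le_mul ?_ (hC j ω) (abs_nonneg _) (by positivity)
          calc |Z j ω - μs j| ≤ |Z j ω| + |μs j| := abs_sub _ _
            _ ≤ C + |μs j| := by linarith [hC j ω]
        · exact ⟨C, fun ω => by simp only [hf, hg, h, h2, if_true, if_false]; exact hC j ω⟩
      · refine ⟨C + |μs i|, fun ω => ?_⟩
        simp only [hf, hg, h, if_false]
        calc |Z i ω - μs i| ≤ |Z i ω| + |μs i| := abs_sub _ _
          _ ≤ C + |μs i| := by linarith [hC i ω]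
    have hWzero : ∀ s : Fin p, s ≠ j → ∫ ω, f s ω ∂μ = 0 := by
      intro s hs
      have hfs : f s = fun ω => Z s ω - μs s := by funext ω; simp [hf, hg, hs]
      rw [hfs, integral_sub (myIntegrable_of_bdd μ (hmeasZ s) (hC s)) (integrable_const _),
        hμ s, integral_const]
      simp
    have key : ∀ ω, P ω * Z j ω = ∏ s ∈ insert j S, f s ω := by
      intro ω
      by_cases hjS : j ∈ S
      · have e1 : ∏ s ∈ S, (Z s ω - μs s)
            = (∏ s ∈ S.erase j, (Z s ω - μs s)) * (Z j ω - μs j) :=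
          (Finset.prod_erase_mul S _ hjS).symm
        have e2 : ∏ s ∈ insert j S, f s ω
            = (∏ s ∈ S.erase j, (Z s ω - μs s)) * ((Z j ω - μs j) * Z j ω) := by
          rw [Finset.insert_eq_self.mpr hjS, ← Finset.prod_erase_mul S _ hjS]
          congr 1
          · exact Finset.prod_congr rfl fun s hs => by
              simp [hf, hg, Finset.ne_of_mem_erase hs]
          · simp [hf, hg, hjS]
        rw [e2, hP]
        simp only
        rw [e1]; ring
      · rw [Finset.prod_insert hjS]
        have e3 : f j ω = Z j ω := by simp [hf, hg, hjS]
        have e4 : ∏ s ∈ S, f s ω = ∏ s ∈ S, (Z s ω - μs s) :=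
          Finset.prod_congr rfl fun s hs => by
            have hsj : s ≠ j := fun h => hjS (h ▸ hs)
            simp [hf, hg, hsj]
        rw [e3, e4, hP]
        simp only
        ring
    have hTprod : ∫ ω, P ω * Z j ω ∂μ = ∏ s ∈ insert j S, ∫ ω, f s ω ∂μ := by
      rw [← myProd_integral μ f hfmeas hfbdd hfind (insert j S)]
      exact integral_congr_ae (ae_of_all _ key)
    obtain ⟨s0, hs0S, hs0j⟩ : ∃ s ∈ S, s ≠ j := by
      by_cases hjS : j ∈ S
      · exact Finset.exists_mem_ne (lt_of_lt_of_le one_lt_two hS) j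
      · obtain ⟨s, hs⟩ := Finset.card_pos.mp (Nat.lt_of_lt_of_le Nat.zero_lt_two hS)
        exact ⟨s, hs, fun h => hjS (h ▸ hs)⟩
    rw [hTprod]
    exact Finset.prod_eq_zero (Finset.mem_insert_of_mem hs0S) (hWzero s0 hs0j)
  -- the ε-term vanishes
  have hPεint : Integrable (fun ω => P ω * ε ω) μ := hintε
  have hεzero : ∫ ω, P ω * ε ω ∂μ = 0 := by
    have hφ : Measurable (fun ω (i : Fin p) => Z i ω) :=
      measurable_pi_lambda _ hmeasZ
    set m := MeasurableSpace.comap (fun ω (i : Fin p) => Z i ω)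
      (inferInstance : MeasurableSpace (Fin p → ℝ)) with hmdef
    have hm : m ≤ _ := hφ.comap_le
    have hPm : StronglyMeasurable[m] P := by
      have hgm : Measurable (fun v : Fin p → ℝ => ∏ s ∈ S, (v s - μs s)) :=
        Finset.measurable_prod S fun s _ => (measurable_pi_apply s).sub measurable_const
      exact (hgm.comp (Measurable.of_comap_le le_rfl)).stronglyMeasurable
    have hPε : Integrable (P * ε) μ := hPεint
    have h1 : μ[P * ε | m] =ᵐ[μ] P * μ[ε | m] :=
      condExp_mul_of_stronglyMeasurable_left hPm hPε hεint
    have h2 : μ[P * ε | m] =ᵐ[μ] 0 := by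
      filter_upwards [h1, hcond] with ω hω1 hω2
      simp only [Pi.mul_apply] at hω1 ⊢
      rw [hω1, hω2]
      simp
    calc ∫ ω, P ω * ε ω ∂μ = ∫ ω, (P * ε) ω ∂μ := rfl
      _ = ∫ ω, (μ[P * ε | m]) ω ∂μ := (integral_condExp hm).symm
      _ = 0 := by rw [integral_congr_ae h2]; simp
  -- assemble
  have hsum : ∀ᵐ ω ∂μ, P ω * (Y ω - D ω * βstar)
      = (∑ j, πstar j * (P ω * Z j ω)) + P ω * ε ω := by
    filter_upwards [hmodel] with ω hω
    have h : Y ω - D ω * βstar = (∑ j, πstar j * Z j ω) + ε ω := by rw [hω]; ring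
    rw [h, mul_add, Finset.mul_sum]
    congr 1
    exact Finset.sum_congr rfl fun j _ => by ring
  have hPZint : ∀ j : Fin p, Integrable (fun ω => πstar j * (P ω * Z j ω)) μ := by
    intro j
    refine (myIntegrable_of_bdd μ (hPmeas.mul (hmeasZ j)) (C := B * C) fun ω => ?_).const_mul _
    rw [Pi.mul_apply, abs_mul]
    exact mul_le_mul (hPbdd ω) (hC j ω) (abs_nonneg _) hBnn
  rw [integral_congr_ae hsum,
    integral_add (integrable_finset_sum _ fun j _ => hPZint j) hPεint,
    integral_finset_sum _ fun j _ => hPZint j, hεzero]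
  have : ∀ j : Fin p, ∫ ω, πstar j * (P ω * Z j ω) ∂μ = 0 := fun j => by
    rw [integral_const_mul, hZterm j, mul_zero]
  simp [this]
end

section
/- Under the ALICE model with mutually independent instruments, if for some subset S with |S| ≥ 2 the interaction relevance condition E[(∏_{s∈S}(Zs - μs)) D] ≠ 0 holds, then β* is the unique real number β satisfying E[(∏_{s∈S}(Zs - μs))(Y - Dβ)] = 0, and β* = E[(∏_{s∈S}(Zs - μs)) Y] / E[(∏_{s∈S}(Zs - μs)) D]. -/
open MeasureTheory ProbabilityTheory

lemma aux_prod_zero {Ω : Type*} [MeasurableSpace Ω] (μ : Measure Ω) [IsProbabilityMeasure μ]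
    {p : ℕ} (g : Fin p → Ω → ℝ)
    (hindep : iIndepFun (m := fun _ : Fin p => (inferInstance : MeasurableSpace ℝ)) g μ)
    (hmeas : ∀ i, Measurable (g i)) (T : Finset (Fin p)) {t : Fin p} (ht : t ∈ T)
    (h0 : ∫ ω, g t ω ∂μ = 0) : ∫ ω, ∏ i ∈ T, g i ω ∂μ = 0 := by
  have hrw : (fun ω => ∏ i ∈ T, g i ω) = (∏ i ∈ T.erase t, g i) * g t := by
    funext ω
    rw [← Finset.prod_erase_mul T _ ht]
    simp [Finset.prod_apply]
  rw [show (∫ ω, ∏ i ∈ T, g i ω ∂μ) = ∫ ω, ((∏ i ∈ T.erase t, g i) * g t) ω ∂μ from by rw [← hrw],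
    (hindep.indepFun_finsetProd_of_notMem hmeas (Finset.notMem_erase t T)).integral_mul_eq_mul_integral
      (show AEStronglyMeasurable (∏ j ∈ T.erase t, g j) μ by
        rw [Finset.prod_fn]
        exact (Finset.measurable_prod _ (fun i _ => hmeas i)).aestronglyMeasurable)
      (hmeas t).aestronglyMeasurable]
  rw [show (∫ ω, g t ω ∂μ) = 0 from h0, mul_zero]

lemma aux_condexp_zero {Ω : Type*} {m mΩ : MeasurableSpace Ω} (hm : m ≤ mΩ)
    (μ : Measure Ω) [IsProbabilityMeasure μ] {W e : Ω → ℝ}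
    (hWm : StronglyMeasurable[m] W) (he : Integrable e μ)
    (hWe : Integrable (W * e) μ) (hcond : μ[e|m] =ᵐ[μ] 0) :
    ∫ ω, W ω * e ω ∂μ = 0 := by
  have h1 : μ[W * e|m] =ᵐ[μ] W * μ[e|m] :=
    condExp_mul_of_stronglyMeasurable_left hWm hWe he
  have h2 : μ[W * e|m] =ᵐ[μ] 0 := by
    refine h1.trans ?_
    filter_upwards [hcond] with ω h
    simp [h]
  have h3 : ∫ ω, W ω * e ω ∂μ = ∫ ω, (W * e) ω ∂μ := rfl
  rw [h3, ← integral_condExp hm (f := W * e), integral_congr_ae h2]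
  simp

theorem stmt_6 {Ω : Type*} [MeasurableSpace Ω] (μ : Measure Ω) [IsProbabilityMeasure μ]
    (p : ℕ) (Y D : Ω → ℝ) (Z : Fin p → Ω → ℝ) (ε : Ω → ℝ)
    (βstar : ℝ) (πstar : Fin p → ℝ) (μs : Fin p → ℝ)
    (hmeasZ : ∀ j, Measurable (Z j)) (hmeasY : Measurable Y) (hmeasD : Measurable D)
    (hbdd : ∃ C : ℝ, ∀ j ω, |Z j ω| ≤ C)
    (hindep : iIndepFun (m := fun _ : Fin p => (inferInstance : MeasurableSpace ℝ)) Z μ)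
    (hμ : ∀ j, ∫ ω, Z j ω ∂μ = μs j)
    (hmodel : ∀ᵐ ω ∂μ, Y ω = D ω * βstar + (∑ j, πstar j * Z j ω) + ε ω)
    (hεint : Integrable ε μ)
    (hcond : μ[ε | MeasurableSpace.comap (fun ω (i : Fin p) => Z i ω)
        (inferInstance : MeasurableSpace (Fin p → ℝ))] =ᵐ[μ] 0)
    (hD : MemLp D 2 μ) (hY : Integrable Y μ)
    (S : Finset (Fin p)) (hS : 2 ≤ S.card)
    (hintY : Integrable (fun ω => (∏ s ∈ S, (Z s ω - μs s)) * Y ω) μ)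
    (hintD : Integrable (fun ω => (∏ s ∈ S, (Z s ω - μs s)) * D ω) μ)
    (hintε : Integrable (fun ω => (∏ s ∈ S, (Z s ω - μs s)) * ε ω) μ)
    (hrel : ∫ ω, (∏ s ∈ S, (Z s ω - μs s)) * D ω ∂μ ≠ 0) :
    (∀ β : ℝ,
      (∫ ω, (∏ s ∈ S, (Z s ω - μs s)) * (Y ω - D ω * β) ∂μ = 0) ↔ β = βstar) ∧
    βstar = (∫ ω, (∏ s ∈ S, (Z s ω - μs s)) * Y ω ∂μ) /
            (∫ ω, (∏ s ∈ S, (Z s ω - μs s)) * D ω ∂μ) := by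
  obtain ⟨C, hC⟩ := hbdd
  set W : Ω → ℝ := fun ω => ∏ s ∈ S, (Z s ω - μs s) with hWdef
  have hmW : Measurable W :=
    Finset.measurable_prod _ (fun s _ => (hmeasZ s).sub measurable_const)
  set K : ℝ := ∏ s ∈ S, (C + |μs s|) with hKdef
  have hWbd : ∀ ω, |W ω| ≤ K := by
    intro ω
    rw [hWdef, Finset.abs_prod]
    refine Finset.prod_le_prod (fun s _ => abs_nonneg _) (fun s _ => ?_)
    calc |Z s ω - μs s| ≤ |Z s ω| + |μs s| := abs_sub _ _
      _ ≤ C + |μs s| := by linarith [hC s ω]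
  have hint_bdd : ∀ (g : Ω → ℝ) (c : ℝ), Measurable g → (∀ ω, |g ω| ≤ c) → Integrable g μ := by
    intro g c hg hgc
    exact (integrable_const c).mono' hg.aestronglyMeasurable
      (ae_of_all _ fun ω => by simpa [Real.norm_eq_abs] using hgc ω)
  -- E[W ε] = 0
  have hφ : Measurable (fun ω (i : Fin p) => Z i ω) :=
    measurable_pi_lambda _ (fun i => hmeasZ i)
  have hWm : StronglyMeasurable[MeasurableSpace.comap (fun ω (i : Fin p) => Z i ω)
      (inferInstance : MeasurableSpace (Fin p → ℝ))] W := by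
    have hg : Measurable (fun v : Fin p → ℝ => ∏ s ∈ S, (v s - μs s)) :=
      Finset.measurable_prod _ (fun s _ => (measurable_pi_apply s).sub measurable_const)
    exact (hg.comp (comap_measurable _)).stronglyMeasurable
  have hWε : ∫ ω, W ω * ε ω ∂μ = 0 :=
    aux_condexp_zero hφ.comap_le μ hWm hεint hintε hcond
  have hSne : S.Nonempty := Finset.card_pos.mp (by omega)
  -- E[W * Z j] = 0 for every j
  have hWZ : ∀ j, ∫ ω, W ω * Z j ω ∂μ = 0 := by
    intro j
    obtain ⟨t, htS, htj⟩ : ∃ t ∈ S, t ≠ j := by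
      by_cases hj : j ∈ S
      · obtain ⟨t, ht⟩ := Finset.card_pos.mp (show 0 < (S.erase j).card by
          have := Finset.card_erase_of_mem hj; omega)
        exact ⟨t, Finset.mem_of_mem_erase ht, Finset.ne_of_mem_erase ht⟩
      · exact ⟨hSne.choose, hSne.choose_spec, fun h => hj (h ▸ hSne.choose_spec)⟩
    set F : Fin p → ℝ → ℝ := fun i x =>
      (if i ∈ S then x - μs i else 1) * (if i = j then x else 1) with hFdef
    have hFmeas : ∀ i, Measurable (F i) := by
      intro i
      refine Measurable.mul ?_ ?_ <;> split <;>
        first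
          | exact measurable_id.sub measurable_const
          | exact measurable_const
          | exact measurable_id
    set g : Fin p → Ω → ℝ := fun i => F i ∘ Z i with hgdef
    have hgmeas : ∀ i, Measurable (g i) := fun i => (hFmeas i).comp (hmeasZ i)
    have hgindep : iIndepFun (m := fun _ : Fin p => (inferInstance : MeasurableSpace ℝ)) g μ :=
      hindep.comp F hFmeas
    have hgt : g t = fun ω => Z t ω - μs t := by
      funext ω; simp [hgdef, hFdef, htS, htj]
    have hgt0 : ∫ ω, g t ω ∂μ = 0 := by
      rw [hgt, integral_sub (hint_bdd _ C (hmeasZ t) (hC t)) (integrable_const _)]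
      simp [hμ t]
    have hprod : ∀ ω, W ω * Z j ω = ∏ i ∈ insert j S, g i ω := by
      intro ω
      simp only [hgdef, hFdef, Function.comp_apply]
      rw [Finset.prod_mul_distrib]
      have h1 : (∏ i ∈ insert j S, if i ∈ S then Z i ω - μs i else 1) = W ω := by
        rw [Finset.prod_ite_mem, Finset.inter_eq_right.mpr (Finset.subset_insert j S)]
      have h2 : (∏ i ∈ insert j S, if i = j then Z i ω else 1) = Z j ω := by
        rw [Finset.prod_ite_eq' (insert j S) j (fun i => Z i ω)]
        simp
      rw [h1, h2]
    rw [integral_congr_ae (ae_of_all _ hprod)]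
    exact aux_prod_zero μ g hgindep hgmeas _ (Finset.mem_insert_of_mem htS) hgt0
  -- integrability of W * Z j
  have hintWZ : ∀ j, Integrable (fun ω => W ω * Z j ω) μ := by
    intro j
    refine hint_bdd _ (K * C) (hmW.mul (hmeasZ j)) (fun ω => ?_)
    rw [abs_mul]
    exact mul_le_mul (hWbd ω) (hC j ω) (abs_nonneg _) ((abs_nonneg _).trans (hWbd ω))
  have hintY' : Integrable (fun ω => W ω * Y ω) μ := hintY
  have hintD' : Integrable (fun ω => W ω * D ω) μ := hintD
  -- key identity
  have hkey : ∫ ω, W ω * Y ω ∂μ = (∫ ω, W ω * D ω ∂μ) * βstar := by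
    have hae : (fun ω => W ω * Y ω) =ᵐ[μ]
        fun ω => W ω * D ω * βstar + (∑ j, πstar j * (W ω * Z j ω)) + W ω * ε ω := by
      filter_upwards [hmodel] with ω h
      have hsum : (∑ j, W ω * (πstar j * Z j ω)) = ∑ j, πstar j * (W ω * Z j ω) :=
        Finset.sum_congr rfl fun j _ => by ring
      rw [h, mul_add, mul_add, Finset.mul_sum, hsum, ← mul_assoc]
    have hintε' : Integrable (fun ω => W ω * ε ω) μ := hintε
    have hint1 : Integrable (fun ω => W ω * D ω * βstar) μ := hintD'.mul_const βstar
    have hint2 : Integrable (fun ω => ∑ j, πstar j * (W ω * Z j ω)) μ :=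
      integrable_finset_sum _ (fun j _ => (hintWZ j).const_mul _)
    have hint12 : Integrable (fun ω => W ω * D ω * βstar
        + ∑ j, πstar j * (W ω * Z j ω)) μ := hint1.add hint2
    rw [integral_congr_ae hae, integral_add hint12 hintε', integral_add hint1 hint2, integral_mul_const,
      integral_finset_sum _ (fun j _ => (hintWZ j).const_mul _)]
    simp [integral_const_mul, hWZ, hWε]
  refine ⟨fun β => ?_, ?_⟩
  · have hsub : ∫ ω, W ω * (Y ω - D ω * β) ∂μ
        = (∫ ω, W ω * Y ω ∂μ) - (∫ ω, W ω * D ω ∂μ) * β := by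
      have h : (fun ω => W ω * (Y ω - D ω * β)) = fun ω => W ω * Y ω - W ω * D ω * β := by
        funext ω; ring
      rw [h, integral_sub hintY' (hintD'.mul_const β), integral_mul_const]
    have hgoal : (∫ ω, (∏ s ∈ S, (Z s ω - μs s)) * (Y ω - D ω * β) ∂μ)
        = ∫ ω, W ω * (Y ω - D ω * β) ∂μ := rfl
    rw [hgoal, hsub, hkey]
    have hrel' : (∫ ω, W ω * D ω ∂μ) ≠ 0 := hrel
    constructor
    · intro h
      have h2 : (∫ ω, W ω * D ω ∂μ) * (βstar - β) = 0 := by ring_nf; linarith [h]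
      rcases mul_eq_zero.mp h2 with h3 | h3
      · exact absurd h3 hrel'
      · linarith [sub_eq_zero.mp h3]
    · rintro rfl; ring
  · have hrel' : (∫ ω, W ω * D ω ∂μ) ≠ 0 := hrel
    have hgoal : (βstar = (∫ ω, (∏ s ∈ S, (Z s ω - μs s)) * Y ω ∂μ) /
            (∫ ω, (∏ s ∈ S, (Z s ω - μs s)) * D ω ∂μ))
        = (βstar = (∫ ω, W ω * Y ω ∂μ) / (∫ ω, W ω * D ω ∂μ)) := rfl
    rw [hgoal, hkey, mul_comm, mul_div_assoc, div_self hrel', mul_one]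
end
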